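/- For n ≥ 3 even, the Laplacian simplex T_{C_n} of the n-cycle is not reflexive: the solution v ∈ R^{n-1} of L_B(n | ∅)·v = 1 is the vector ((2j+1-n)/2)_{j=1}^{n-1}, which has non-integer (half-integer) entries when n is even. However 2v ∈ Z^{n-1} with coprime entries, so T_{C_n} is 2-reflexive. -/
import Mathlib

lemma card_compl_single {n : ℕ} (a : Fin n) :
    ({a}ᶜ : Finset (Fin n)).card = n - 1 := by
  simp [Finset.card_compl]

/-- `delR M i` is `M` with row `i` deleted (rows kept in increasing order). -/
def delR {α : Type*} {m l : ℕ} (M : Matrix (Fin m) (Fin l) α) (i : Fin m) :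
    Matrix (Fin (m - 1)) (Fin l) α :=
  fun a b => M (({i}ᶜ : Finset (Fin m)).orderIsoOfFin (card_compl_single i) a) b

set_option maxHeartbeats 2000000 in
set_option maxRecDepth 4000 in
/-- For even `n ≥ 3`, the Laplacian simplex of the `n`-cycle is not
reflexive: the solution `v` of `L_B(n | ∅)·v = 𝟙` is
`v_j = (2j+1-n)/2` (1-based), which is a non-integer (half-integer) vector,
while `2v` is an integer vector with coprime entries (so `T_{C_n}` is
`2`-reflexive). -/
theorem even_cycle_two_reflexive {n : ℕ} (hn : 3 ≤ n) (heven : Even n)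
    (L : Matrix (Fin n) (Fin n) ℤ)
    (hL : ∀ a b : Fin n, L a b =
      if a = b then 2
      else if b = a + ⟨1, by omega⟩ ∨ a = b + ⟨1, by omega⟩ then -1 else 0)
    (A : Matrix (Fin n) (Fin (n - 1)) ℤ)
    (hA : ∀ i j, A i j = if (i : ℕ) ≤ (j : ℕ) then 1 else 0)
    (v : Fin (n - 1) → ℚ)
    (hv : ∀ j, v j = (2 * ((j : ℚ) + 1) + 1 - n) / 2) :
    ((delR (L * A) ⟨n - 1, by omega⟩).map (Int.cast : ℤ → ℚ)).mulVec v =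
        (fun _ => 1) ∧
    (∀ j, ¬ ∃ z : ℤ, (z : ℚ) = v j) ∧
    (∃ w : Fin (n - 1) → ℤ, (∀ j, (w j : ℚ) = 2 * v j) ∧
      Finset.univ.gcd w = 1) := by
  haveI : NeZero n := ⟨by omega⟩
  obtain ⟨K, hK⟩ := heven
  set c : Fin n := ⟨1, by omega⟩ with hc
  have hc0 : c ≠ 0 := by simp [hc, Fin.ext_iff]
  have hcc0 : c + c ≠ 0 := by
    intro h
    have hv2 := congrArg Fin.val h
    rw [Fin.add_def] at hv2
    have h2 : ((c : ℕ) + (c : ℕ)) % n = 2 := by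
      show (1 + 1) % n = 2
      exact Nat.mod_eq_of_lt (by omega)
    rw [Fin.val_zero] at hv2
    have : ((c : ℕ) + (c : ℕ)) % n = 0 := hv2
    omega
  -- entries of L * A
  have hLA : ∀ (i : Fin n) (j : Fin (n - 1)),
      (L * A) i j = 2 * A i j - A (i + c) j - A (i - c) j := by
    intro i j
    rw [Matrix.mul_apply]
    have e1 : i + c ≠ i := fun h => hc0 (by rwa [add_eq_left] at h)
    have e2 : i - c ≠ i := fun h => hc0 (by rwa [sub_eq_self] at h)
    have e3 : i + c ≠ i - c := by
      intro h
      apply hcc0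
      have : i + (c + c) = i := by
        rw [← add_assoc, h, sub_add_cancel]
      rwa [add_eq_left] at this
    have key : ∀ b : Fin n, L i b * A b j =
        (if b = i then 2 * A b j else 0) +
        ((if b = i + c then -(A b j) else 0) + (if b = i - c then -(A b j) else 0)) := by
      intro b
      rw [hL i b]
      by_cases h1 : b = i
      · subst h1
        rw [if_pos rfl, if_pos rfl, if_neg (Ne.symm e1), if_neg (Ne.symm e2)]
        ring
      · by_cases h2 : b = i + c
        · subst h2
          rw [if_neg (Ne.symm e1), if_pos (Or.inl rfl), if_neg e1, if_pos rfl, if_neg e3]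
          ring
        · by_cases h3 : i = b + c
          · have h4 : b = i - c := by rw [h3, add_sub_cancel_right]
            subst h4
            rw [if_neg (Ne.symm e2), if_pos (Or.inr (by rw [sub_add_cancel])),
              if_neg e2, if_neg (Ne.symm e3), if_pos rfl]
            ring
          · have h4 : b ≠ i - c := by
              intro h4
              exact h3 (by rw [h4, sub_add_cancel])
            rw [if_neg (fun h => h1 h.symm), if_neg (by tauto), if_neg h1, if_neg h2, if_neg h4]
            ring
    calc ∑ b : Fin n, L i b * A b j
        = ∑ b : Fin n, ((if b = i then 2 * A b j else 0) +
            ((if b = i + c then -(A b j) else 0) + (if b = i - c then -(A b j) else 0))) :=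
          Finset.sum_congr rfl fun b _ => key b
      _ = 2 * A i j - A (i + c) j - A (i - c) j := by
          rw [Finset.sum_add_distrib, Finset.sum_add_distrib,
            Finset.sum_ite_eq' _ i, Finset.sum_ite_eq' _ (i + c), Finset.sum_ite_eq' _ (i - c)]
          simp only [Finset.mem_univ, if_true]
          ring
  -- the delR embedding keeps values
  have hemb : ∀ a : Fin (n - 1),
      ((({(⟨n - 1, by omega⟩ : Fin n)}ᶜ : Finset (Fin n)).orderIsoOfFin
        (card_compl_single _)) a : Fin n) = ⟨a.val, by omega⟩ := by
    have hfs : ∀ x : Fin (n - 1),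
        (⟨x.val, by omega⟩ : Fin n) ∈ ({(⟨n - 1, by omega⟩ : Fin n)}ᶜ : Finset (Fin n)) := by
      intro x
      rw [Finset.mem_compl, Finset.mem_singleton]
      intro hx
      have h := congrArg Fin.val hx
      have := x.2
      simp only [Fin.val_mk] at h
      omega
    have hmono : StrictMono (fun x : Fin (n - 1) => (⟨x.val, by omega⟩ : Fin n)) := by
      intro x y hxy
      exact Fin.mk_lt_mk.mpr hxy
    have huniq := Finset.orderEmbOfFin_unique
      (card_compl_single (⟨n - 1, by omega⟩ : Fin n)) hfs hmono
    intro a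
    rw [Finset.coe_orderIsoOfFin_apply, ← huniq]
  -- partial sums
  obtain ⟨T, hT⟩ : ∃ T : ℕ → ℚ,
      T = fun a => ∑ j : Fin (n - 1), if a ≤ (j : ℕ) then v j else 0 := ⟨_, rfl⟩
  have hT_top : ∀ a, n - 1 ≤ a → T a = 0 := by
    intro a ha
    rw [hT]
    apply Finset.sum_eq_zero
    intro j _
    have := j.2
    rw [if_neg (by omega)]
  have hT_step : ∀ a (ha : a < n - 1), T a = v ⟨a, ha⟩ + T (a + 1) := by
    intro a ha
    have h : T a = (∑ j : Fin (n - 1), if j = (⟨a, ha⟩ : Fin (n - 1)) then v j else 0)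
        + T (a + 1) := by
      rw [hT, ← Finset.sum_add_distrib]
      apply Finset.sum_congr rfl
      intro j _
      have hval : j = (⟨a, ha⟩ : Fin (n - 1)) ↔ (j : ℕ) = a := by
        rw [Fin.ext_iff]
      by_cases h1 : (j : ℕ) = a
      · rw [if_pos (by omega), if_pos (hval.mpr h1), if_neg (by omega)]; ring
      · by_cases h2 : a + 1 ≤ (j : ℕ)
        · rw [if_pos (by omega), if_neg (fun h => h1 (hval.mp h)), if_pos h2]; ring
        · rw [if_neg (by omega), if_neg (fun h => h1 (hval.mp h)), if_neg h2]; ring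
    rw [h, Finset.sum_ite_eq' _ _ v, if_pos (Finset.mem_univ _)]
  have hm1 : ((n - 1 : ℕ) : ℚ) = (n : ℚ) - 1 := by
    rw [Nat.cast_sub (by omega : 1 ≤ n)]; norm_num
  have hT0 : T 0 = ((n : ℚ) - 1) / 2 := by
    have hgauss : (∑ j ∈ Finset.range (n - 1), (j : ℚ)) =
        ((n : ℚ) - 1) * ((n : ℚ) - 2) / 2 := by
      have h1 := Finset.sum_range_id_mul_two (n - 1)
      have h1' : (((∑ i ∈ Finset.range (n - 1), i) * 2 : ℕ) : ℚ)
          = (((n - 1) * (n - 1 - 1) : ℕ) : ℚ) := by rw [h1]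
      rw [Nat.cast_mul, Nat.cast_mul, Nat.cast_ofNat] at h1'
      have hm2 : ((n - 1 - 1 : ℕ) : ℚ) = (n : ℚ) - 2 := by
        rw [show n - 1 - 1 = n - 2 by omega, Nat.cast_sub (by omega : 2 ≤ n)]; norm_num
      have hcast : (∑ j ∈ Finset.range (n - 1), (j : ℚ))
          = ((∑ i ∈ Finset.range (n - 1), i : ℕ) : ℚ) := by push_cast; ring
      rw [hcast]
      rw [hm1, hm2] at h1'
      linarith
    rw [hT]
    simp only [Nat.zero_le, if_true]
    have hve : ∀ j : Fin (n - 1), v j = ((j : ℚ) + ((3 : ℚ) - n) / 2) := by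
      intro j
      rw [hv j]; ring
    rw [Finset.sum_congr rfl (fun j _ => hve j), Finset.sum_add_distrib, Finset.sum_const,
      Finset.card_univ, Fintype.card_fin,
      Fin.sum_univ_eq_sum_range (fun j => ((j : ℕ) : ℚ)), hgauss, nsmul_eq_mul, hm1]
    ring
  refine ⟨?_, ?_, ?_⟩
  · -- mulVec computation
    funext i
    have hi2 := i.2
    set ι : Fin n := ⟨i.val, by omega⟩ with hι
    have hentry : ∀ j, ((delR (L * A) ⟨n - 1, by omega⟩).map (Int.cast : ℤ → ℚ)) i j
        = (((L * A) ι j : ℤ) : ℚ) := by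
      intro j
      simp only [delR, Matrix.map_apply]
      rw [hemb i]
    have hstep0 : ∀ j : Fin (n - 1),
        ((delR (L * A) ⟨n - 1, by omega⟩).map (Int.cast : ℤ → ℚ)) i j * v j
        = 2 * (((A ι j : ℤ) : ℚ) * v j) - ((A (ι + c) j : ℤ) : ℚ) * v j
            - ((A (ι - c) j : ℤ) : ℚ) * v j := by
      intro j
      rw [hentry j, hLA]
      push_cast
      ring
    have hS : ∀ a : Fin n, (∑ j : Fin (n - 1), ((A a j : ℤ) : ℚ) * v j) = T (a : ℕ) := by
      intro a
      rw [hT]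
      apply Finset.sum_congr rfl
      intro j _
      rw [hA]
      by_cases h : (a : ℕ) ≤ (j : ℕ) <;> simp [h]
    have hsum : (∑ j : Fin (n - 1),
        ((delR (L * A) ⟨n - 1, by omega⟩).map (Int.cast : ℤ → ℚ)) i j * v j)
        = 2 * T (ι : ℕ) - T ((ι + c : Fin n) : ℕ) - T ((ι - c : Fin n) : ℕ) := by
      rw [Finset.sum_congr rfl (fun j _ => hstep0 j), Finset.sum_sub_distrib,
        Finset.sum_sub_distrib, ← Finset.mul_sum, hS, hS, hS]
    show (∑ j : Fin (n - 1),
        ((delR (L * A) ⟨n - 1, by omega⟩).map (Int.cast : ℤ → ℚ)) i j * v j) = 1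
    rw [hsum]
    have hιval : (ι : ℕ) = i.val := rfl
    have haddval : ((ι + c : Fin n) : ℕ) = i.val + 1 := by
      rw [Fin.add_def]
      show (i.val + 1) % n = i.val + 1
      exact Nat.mod_eq_of_lt (by omega)
    rcases Nat.eq_zero_or_pos i.val with h0 | hpos
    · have hsubval : ((ι - c : Fin n) : ℕ) = n - 1 := by
        rw [Fin.sub_def]
        show (n - 1 + i.val) % n = n - 1
        rw [h0]
        exact Nat.mod_eq_of_lt (by omega)
      rw [hιval, haddval, hsubval, h0, hT_top (n - 1) le_rfl]
      have hstep := hT_step 0 (by omega)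
      have hv0 : v ⟨0, by omega⟩ = (3 - (n : ℚ)) / 2 := by
        rw [hv]
        norm_num
      rw [hv0, hT0] at hstep
      linarith
    · have hsubval : ((ι - c : Fin n) : ℕ) = i.val - 1 := by
        rw [Fin.sub_def]
        show (n - 1 + i.val) % n = i.val - 1
        rw [show n - 1 + i.val = n + (i.val - 1) by omega, Nat.add_mod_left]
        exact Nat.mod_eq_of_lt (by omega)
      rw [hιval, haddval, hsubval]
      have hstep1 := hT_step i.val (by omega)
      have hstep2 := hT_step (i.val - 1) (Nat.lt_of_le_of_lt (Nat.sub_le i.val 1) hi2)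
      rw [show i.val - 1 + 1 = i.val by omega] at hstep2
      have hva : v ⟨i.val, by omega⟩ = (2 * ((i.val : ℚ) + 1) + 1 - n) / 2 := by
        rw [hv]
      have hvb : v ⟨i.val - 1, by omega⟩ = (2 * ((i.val : ℚ) - 1 + 1) + 1 - n) / 2 := by
        rw [hv]
        rw [show (((⟨i.val - 1, by omega⟩ : Fin (n - 1)) : ℕ) : ℚ) = ((i.val - 1 : ℕ) : ℚ)
          from rfl, Nat.cast_sub (by omega : 1 ≤ i.val)]
        push_cast
        ring
      rw [hva] at hstep1
      rw [hvb] at hstep2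
      linarith
  · -- non-integrality
    rintro j ⟨z, hz⟩
    rw [hv] at hz
    have h2 : ((2 * z : ℤ) : ℚ) = ((2 * ((j : ℕ) : ℤ) + 3 - n : ℤ) : ℚ) := by
      push_cast
      field_simp at hz
      linarith
    have h3 : 2 * z = 2 * ((j : ℕ) : ℤ) + 3 - n := by exact_mod_cast h2
    omega
  · refine ⟨fun j => 2 * ((j : ℕ) : ℤ) + 3 - n, fun j => by rw [hv]; push_cast; ring, ?_⟩
    set w : Fin (n - 1) → ℤ := fun j => 2 * ((j : ℕ) : ℤ) + 3 - n with hw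
    set g : ℤ := Finset.univ.gcd w with hg
    have h0 : g ∣ 3 - (n : ℤ) := by
      have := Finset.gcd_dvd (f := w) (Finset.mem_univ (⟨0, by omega⟩ : Fin (n - 1)))
      simpa [hw] using this
    have h1 : g ∣ 5 - (n : ℤ) := by
      have := Finset.gcd_dvd (f := w) (Finset.mem_univ (⟨1, by omega⟩ : Fin (n - 1)))
      simpa [hw] using this
    have h2 : g ∣ 2 := by
      have := dvd_sub h1 h0
      norm_num at this
      exact this
    have hgnn : 0 ≤ g := Int.nonneg_of_normalize_eq_self Finset.normalize_gcd
    have hgle : g ≤ 2 := Int.le_of_dvd (by norm_num) h2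
    interval_cases g
    · norm_num at h2
    · rfl
    · obtain ⟨t, ht⟩ := h0
      omega
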